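/- Let n ≥ 2, r ≥ 1, and let T¹, …, Tʳ be symmetric n×n real matrices. Then ∑_{α=1}^r ( T^α_{11}·trace(T^α) − ∑_{j=1}^n (T^α_{1j})² ) ≥ ((n−1)/n²)·∑_{α=1}^r ( 2·trace(T^α)² − n·‖T^α‖_F² − (n−2)·|trace(T^α)|·√((n·‖T^α‖_F² − trace(T^α)²)/(n−1)) ). -/

import Mathlib

/-!
Put `x = T₁₁`, `t = trace T`, `b = ∑ⱼ T₁ⱼ²`, `f = ‖T‖_F²`. Bounding the Frobenius norm from below by
the first row, the first column (equal to it by symmetry) and the remaining diagonal, and the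
remaining diagonal by Cauchy–Schwarz, gives `(n x - t)² + 2n(n-1)(b - x²) ≤ (n-1)(n f - t²)`.
In particular `|n x - t| ≤ (n-1) S` with `S = √((n f - t²)/(n-1))`, and the difference of the two
sides of the inequality for one matrix, multiplied by `n²`, splits as a sum of three nonnegative
terms. Summing over `α` gives the theorem.
-/

open Finset

theorem sq_sum_sub_le_card_sub_one_mul_sum_erase {ι : Type*} [Fintype ι] [DecidableEq ι]
    (d : ι → ℝ) (k : ι) :
    (∑ i, d i - d k) ^ 2 ≤ (Fintype.card ι - 1) * ∑ i ∈ univ.erase k, d i ^ 2 := by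
  have hcard : ((univ.erase k).card : ℝ) = Fintype.card ι - 1 := by
    rw [card_erase_of_mem (mem_univ k), card_univ, Nat.cast_sub (Fintype.card_pos_iff.mpr ⟨k⟩),
      Nat.cast_one]
  rw [← sum_erase_eq_sub (mem_univ k), ← hcard]
  exact sq_sum_le_card_mul_sum_sq

theorem hineva_of_sq_mul_sub_add_le {m x t b f : ℝ} (hm : 2 ≤ m) (hb : x ^ 2 ≤ b)
    (h : (m * x - t) ^ 2 + 2 * m * (m - 1) * (b - x ^ 2) ≤ (m - 1) * (m * f - t ^ 2)) :
    (m - 1) / m ^ 2 * (2 * t ^ 2 - m * f - (m - 2) * |t| * √((m * f - t ^ 2) / (m - 1))) ≤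
      x * t - b := by
  set S := √((m * f - t ^ 2) / (m - 1))
  have hm1 : 0 < m - 1 := by linarith
  have hslack : 0 ≤ 2 * m * (m - 1) * (b - x ^ 2) := by
    have : 0 ≤ b - x ^ 2 := by linarith
    positivity
  have hS : (m - 1) ^ 2 * S ^ 2 = (m - 1) * (m * f - t ^ 2) := by
    rw [Real.sq_sqrt (div_nonneg (by nlinarith [sq_nonneg (m * x - t)]) hm1.le)]
    field_simp
  have hdev : |m * x - t| ≤ (m - 1) * S := by
    refine abs_le_of_sq_le_sq ?_ (by positivity)
    rw [mul_pow, hS]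
    linarith
  have hcross : 0 ≤ t * (m * x - t) + |t| * ((m - 1) * S) := by
    nlinarith [abs_mul t (m * x - t), neg_abs_le (t * (m * x - t)), abs_nonneg t]
  rw [div_mul_eq_mul_div, div_le_iff₀ (by positivity)]
  -- `m²(xt - b) - (m-1)(2t² - mf - (m-2)|t|S)` is the sum of these three nonnegative terms.
  have hsplit := add_nonneg (add_nonneg (mul_nonneg (by linarith : 0 ≤ m - 2) hcross)
    (sub_nonneg.mpr h)) (mul_nonneg (by nlinarith : 0 ≤ m ^ 2 - 2 * m) (sub_nonneg.mpr hb))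
  linear_combination hsplit

namespace Matrix

variable {ι : Type*} [Fintype ι]

theorem IsSymm.two_mul_sum_sq_row_sub_add_sum_sq_diag_erase_le [DecidableEq ι]
    {T : Matrix ι ι ℝ} (hT : T.IsSymm) (k : ι) :
    2 * ∑ j, T k j ^ 2 - T k k ^ 2 + ∑ i ∈ univ.erase k, T i i ^ 2 ≤ ∑ i, ∑ j, T i j ^ 2 := by
  have hrow : ∀ i ∈ univ.erase k, T k i ^ 2 + T i i ^ 2 ≤ ∑ j, T i j ^ 2 := by
    intro i hi
    rw [← hT.apply k i, ← sum_pair (f := fun j => T i j ^ 2) (ne_of_mem_erase hi).symm]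
    exact sum_le_sum_of_subset_of_nonneg (subset_univ _) fun j _ _ => sq_nonneg _
  have hcol : ∑ i ∈ univ.erase k, T k i ^ 2 = ∑ j, T k j ^ 2 - T k k ^ 2 :=
    sum_erase_eq_sub (mem_univ k)
  calc 2 * ∑ j, T k j ^ 2 - T k k ^ 2 + ∑ i ∈ univ.erase k, T i i ^ 2
      = ∑ j, T k j ^ 2 + ∑ i ∈ univ.erase k, (T k i ^ 2 + T i i ^ 2) := by
        rw [sum_add_distrib, hcol]; ring
    _ ≤ ∑ j, T k j ^ 2 + ∑ i ∈ univ.erase k, ∑ j, T i j ^ 2 := by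
        gcongr with i hi; exact hrow i hi
    _ = ∑ i, ∑ j, T i j ^ 2 := add_sum_erase _ (fun i => ∑ j, T i j ^ 2) (mem_univ k)

theorem IsSymm.sq_card_mul_sub_trace_add_le {T : Matrix ι ι ℝ} (hT : T.IsSymm) (k : ι) :
    ((Fintype.card ι : ℝ) * T k k - T.trace) ^ 2
        + 2 * Fintype.card ι * (Fintype.card ι - 1) * (∑ j, T k j ^ 2 - T k k ^ 2) ≤
      (Fintype.card ι - 1) * (Fintype.card ι * ∑ i, ∑ j, T i j ^ 2 - T.trace ^ 2) := by
  classical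
  have hm : (1 : ℝ) ≤ Fintype.card ι := by exact_mod_cast Fintype.card_pos_iff.mpr ⟨k⟩
  have hcs := sq_sum_sub_le_card_sub_one_mul_sum_erase (fun i => T i i) k
  have hfro := hT.two_mul_sum_sq_row_sub_add_sum_sq_diag_erase_le k
  have hoff : (T.trace - T k k) ^ 2 ≤ (Fintype.card ι - 1) *
      (∑ i, ∑ j, T i j ^ 2 - 2 * ∑ j, T k j ^ 2 + T k k ^ 2) :=
    hcs.trans (mul_le_mul_of_nonneg_left (by linarith) (by linarith))
  linear_combination (Fintype.card ι : ℝ) * hoff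

theorem IsSymm.hineva_inequality {T : Matrix ι ι ℝ} (hT : T.IsSymm) (k : ι)
    (hι : 2 ≤ Fintype.card ι) :
    ((Fintype.card ι : ℝ) - 1) / (Fintype.card ι : ℝ) ^ 2 *
        (2 * T.trace ^ 2 - Fintype.card ι * ∑ i, ∑ j, T i j ^ 2
          - (Fintype.card ι - 2) * |T.trace| *
            √((Fintype.card ι * ∑ i, ∑ j, T i j ^ 2 - T.trace ^ 2) / (Fintype.card ι - 1))) ≤
      T k k * T.trace - ∑ j, T k j ^ 2 :=
  hineva_of_sq_mul_sub_add_le (by exact_mod_cast hι)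
    (single_le_sum (f := fun j => T k j ^ 2) (fun j _ => sq_nonneg _) (mem_univ k))
    (hT.sq_card_mul_sub_trace_add_le k)

end Matrix

/-- Summed form of Hineva's inequality for a family `T¹, …, Tʳ` of symmetric
`n × n` real matrices. -/
theorem hineva_inequality_sum (n r : ℕ) (hn : 2 ≤ n)
    (T : Fin r → Fin n → Fin n → ℝ)
    (hT : ∀ α i j, T α i j = T α j i) :
    ∑ α, (T α ⟨0, by omega⟩ ⟨0, by omega⟩ * (∑ i, T α i i)
        - ∑ j, (T α ⟨0, by omega⟩ j) ^ 2) ≥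
      ((n : ℝ) - 1) / (n : ℝ) ^ 2 *
        ∑ α, (2 * (∑ i, T α i i) ^ 2 - (n : ℝ) * (∑ i, ∑ j, (T α i j) ^ 2)
          - ((n : ℝ) - 2) * |∑ i, T α i i| *
            Real.sqrt (((n : ℝ) * (∑ i, ∑ j, (T α i j) ^ 2) - (∑ i, T α i i) ^ 2)
              / ((n : ℝ) - 1))) := by
  rw [ge_iff_le, mul_sum]
  refine sum_le_sum fun α _ => ?_
  have h := (Matrix.IsSymm.ext fun i j => hT α j i).hineva_inequality ⟨0, by omega⟩
    (by rwa [Fintype.card_fin])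
  rw [Fintype.card_fin] at h
  exact h
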